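/- arXiv:2108.05437 — 3 statements merged into one kernel-verified Lean document; each statement's English description precedes it below -/
import Mathlib

section
/- Let Ω be a metric space, let p ≥ 2, and let S ⊆ ℝ^p be a bounded convex set with nonempty interior. Let h : ℝ^p → Ω be continuous on S and non-constant on S. Suppose there exist continuous functions g₁, g₂ : ℝ → Ω and vectors α, β ∈ ℝ^p with ‖α‖ = ‖β‖ = 1 and positive first coordinates α₁ > 0 and β₁ > 0, such that h(x) = g₁(α⊤x) and h(x) = g₂(β⊤x) for all x ∈ S. Then α = β, and g₁(t) = g₂(t) for every t in the set {α⊤x : x ∈ S}. -/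
/-! If `α ≠ ±β`, there is a direction `u` with `⟪α, u⟫ = 0` and `⟪β, u⟫ = 1`. Moving along `u`
changes only the `β`-index, so a point `w` near an interior point `z` is linked to `z` through
`v = z + ⟪β, w - z⟫ • u`: `h w = h v` via `g₂` and `h v = h z` via `g₁`. Hence `h` is locally
constant on the connected set `interior S`, so constant there, and by continuity constant on
`S ⊆ closure (interior S)`, contradicting non-constancy. Positive first coordinates rule out
`α = -β`. -/

section

open Set Filter Topology RealInnerProductSpace

theorem IsPreconnected.apply_eq_of_eventually_eq {X Y : Type*} [TopologicalSpace X]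
    {U : Set X} (hconn : IsPreconnected U) (hU : IsOpen U) {f : X → Y}
    (hloc : ∀ z ∈ U, ∀ᶠ w in 𝓝 z, f w = f z) {x y : X} (hx : x ∈ U) (hy : y ∈ U) :
    f x = f y := by
  have : PreconnectedSpace U := isPreconnected_iff_preconnectedSpace.mp hconn
  have hf : IsLocallyConstant fun z : U => f z := by
    refine (IsLocallyConstant.iff_eventually_eq _).mpr fun z => ?_
    rw [hU.isOpenEmbedding_subtypeVal.nhds_eq_comap]
    exact (hloc z z.2).comap _
  exact hf.apply_eq_of_preconnectedSpace ⟨x, hx⟩ ⟨y, hy⟩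

variable {E : Type*} [NormedAddCommGroup E] [InnerProductSpace ℝ E]

theorem exists_inner_eq_zero_and_inner_eq_one {α β : E} (hα : ‖α‖ = 1) (hβ : ‖β‖ = 1)
    (hne : α ≠ β) (hne_neg : α ≠ -β) : ∃ u : E, ⟪α, u⟫ = 0 ∧ ⟪β, u⟫ = 1 := by
  set c := ⟪α, β⟫
  have hc_lt : c < 1 := (inner_lt_one_iff_real_of_norm_eq_one hα hβ).mpr hne
  have hc_gt : -1 < c := by
    have := (inner_lt_one_iff_real_of_norm_eq_one hα (by rwa [norm_neg])).mpr hne_neg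
    rw [inner_neg_right] at this
    linarith
  have hαα : ⟪α, α⟫ = 1 := by rw [real_inner_self_eq_norm_sq, hα, one_pow]
  have hββ : ⟪β, β⟫ = 1 := by rw [real_inner_self_eq_norm_sq, hβ, one_pow]
  have hc_sq : 1 - c ^ 2 ≠ 0 := by nlinarith
  refine ⟨(1 - c ^ 2)⁻¹ • (β - c • α), ?_, ?_⟩
  · simp only [inner_smul_right, inner_sub_right, hαα, c]
    ring
  · rw [inner_smul_right, inner_sub_right, inner_smul_right, hββ, real_inner_comm α β]
    field_simp
    ring

theorem eventually_eq_of_eqOn_comp_inner {Ω : Type*} {U : Set E} (hU : IsOpen U) {f : E → Ω}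
    {g₁ g₂ : ℝ → Ω} {α β u : E} (hαu : ⟪α, u⟫ = 0) (hβu : ⟪β, u⟫ = 1)
    (hrep₁ : ∀ x ∈ U, f x = g₁ ⟪α, x⟫) (hrep₂ : ∀ x ∈ U, f x = g₂ ⟪β, x⟫) :
    ∀ z ∈ U, ∀ᶠ w in 𝓝 z, f w = f z := by
  intro z hz
  set v : E → E := fun w => z + ⟪β, w - z⟫ • u
  have hv : Tendsto v (𝓝 z) (𝓝 z) := by
    have : Continuous v := by fun_prop
    simpa [v] using this.tendsto z
  filter_upwards [hU.mem_nhds hz, hv (hU.mem_nhds hz)] with w hw hvw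
  have hαv : ⟪α, v w⟫ = ⟪α, z⟫ := by simp [v, inner_add_right, inner_smul_right, hαu]
  have hβv : ⟪β, v w⟫ = ⟪β, w⟫ := by
    simp [v, inner_add_right, inner_smul_right, inner_sub_right, hβu]
  calc f w = g₂ ⟪β, v w⟫ := by rw [hrep₂ w hw, hβv]
    _ = g₁ ⟪α, v w⟫ := by rw [← hrep₂ _ hvw, hrep₁ _ hvw]
    _ = f z := by rw [hαv, hrep₁ z hz]

theorem eq_or_eq_neg_of_eqOn_comp_inner {Ω : Type*} [TopologicalSpace Ω] [T2Space Ω]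
    {S : Set E} (hSconv : Convex ℝ S) (hSint : (interior S).Nonempty)
    {h : E → Ω} (hcont : ContinuousOn h S) (hnonconst : ∃ x ∈ S, ∃ y ∈ S, h x ≠ h y)
    {g₁ g₂ : ℝ → Ω} {α β : E} (hα : ‖α‖ = 1) (hβ : ‖β‖ = 1)
    (hrep₁ : ∀ x ∈ S, h x = g₁ ⟪α, x⟫) (hrep₂ : ∀ x ∈ S, h x = g₂ ⟪β, x⟫) :
    α = β ∨ α = -β := by
  by_contra! hne
  obtain ⟨u, hαu, hβu⟩ := exists_inner_eq_zero_and_inner_eq_one hα hβ hne.1 hne.2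
  obtain ⟨x₀, hx₀⟩ := hSint
  have hloc := eventually_eq_of_eqOn_comp_inner isOpen_interior hαu hβu
    (fun x hx => hrep₁ x (interior_subset hx)) (fun x hx => hrep₂ x (interior_subset hx))
  have hconst_int : EqOn h (fun _ => h x₀) (interior S) := fun x hx =>
    hSconv.interior.isPreconnected.apply_eq_of_eventually_eq isOpen_interior hloc hx hx₀
  have hconst : EqOn h (fun _ => h x₀) S :=
    hconst_int.of_subset_closure hcont continuousOn_const interior_subset
      ((hSconv.closure_interior_eq_closure_of_nonempty_interior ⟨x₀, hx₀⟩).symm ▸ subset_closure)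
  obtain ⟨x, hx, y, hy, hxy⟩ := hnonconst
  exact hxy ((hconst hx).trans (hconst hy).symm)

end

/-- Proposition 1 (identifiability of the single-index Fréchet regression model):
if a metric-space-valued regression function `h`, continuous and non-constant on a
bounded convex set `S` with nonempty interior, admits two single-index representations
with unit directions `α`, `β` (positive first coordinates) and continuous links
`g₁`, `g₂`, then `α = β` and `g₁ = g₂` on the set of index values `{⟪α, x⟫ : x ∈ S}`. -/
theorem identifiability_single_index_frechet
    {Ω : Type*} [MetricSpace Ω] {p : ℕ} (hp : 2 ≤ p)
    (S : Set (EuclideanSpace ℝ (Fin p)))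
    (hSconv : Convex ℝ S) (hSint : (interior S).Nonempty)
    (h : EuclideanSpace ℝ (Fin p) → Ω) (hcont : ContinuousOn h S)
    (hnonconst : ∃ x ∈ S, ∃ y ∈ S, h x ≠ h y)
    (g₁ g₂ : ℝ → Ω)
    (α β : EuclideanSpace ℝ (Fin p)) (hα : ‖α‖ = 1) (hβ : ‖β‖ = 1)
    (hα1 : 0 < α ⟨0, by omega⟩) (hβ1 : 0 < β ⟨0, by omega⟩)
    (hrep₁ : ∀ x ∈ S, h x = g₁ (inner ℝ α x))
    (hrep₂ : ∀ x ∈ S, h x = g₂ (inner ℝ β x)) :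
    α = β ∧ ∀ t ∈ {t : ℝ | ∃ x ∈ S, (inner ℝ α x : ℝ) = t}, g₁ t = g₂ t := by
  have hαβ : α = β := by
    refine (eq_or_eq_neg_of_eqOn_comp_inner hSconv hSint hcont hnonconst hα hβ hrep₁ hrep₂
      ).resolve_right fun hneg => ?_
    have : α ⟨0, by omega⟩ = -β ⟨0, by omega⟩ := by rw [hneg]; rfl
    linarith
  refine ⟨hαβ, ?_⟩
  rintro t ⟨x, hx, rfl⟩
  rw [← hrep₁ x hx, hrep₂ x hx, hαβ]
end

section
/- Let (Ω, d) be a metric space, let a > 0, L⋆ > 0, C⋆ ≥ 0, D ≥ 0, and let u, p, q, r, v ∈ Ω satisfy: (i) the comparison (CN) inequality 2·d(u, v)² ≤ d(u, p)² + d(u, r)² − (1/2)·d(p, r)²; (ii) d(p, r) ≥ 2aL⋆; (iii) d(v, q) ≤ C⋆a²; and (iv) d(u, v) ≤ D and d(u, q) ≤ D. Then d(u, r)² − 2·d(u, q)² + d(u, p)² ≥ (2L⋆² − 4DC⋆)·a². In particular, if 2L⋆² > 4DC⋆ then the second-order difference (1/a²)[d(u, r)² − 2·d(u, q)² + d(u,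 p)²] is bounded below by the positive constant κ = 2L⋆² − 4DC⋆. -/
/-!
Moving `u`'s reference point from the midpoint `v` to `q` changes `d(u, ·)²` by at most
`(d(u,q) + d(u,v)) · d(v,q) ≤ 2D · C⋆a²`, so the comparison inequality turns into
`d(u,r)² − 2d(u,q)² + d(u,p)² ≥ ½ d(p,r)² − 4DC⋆a²`, and `d(p,r) ≥ 2aL⋆` finishes.
-/

theorem dist_sq_sub_dist_sq_le {α : Type*} [PseudoMetricSpace α] (x y z : α) :
    dist x y ^ 2 - dist x z ^ 2 ≤ (dist x y + dist x z) * dist z y := by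
  have hdiff : dist x y - dist x z ≤ dist z y := by
    linarith [dist_triangle x z y]
  calc dist x y ^ 2 - dist x z ^ 2 = (dist x y + dist x z) * (dist x y - dist x z) := by ring
    _ ≤ (dist x y + dist x z) * dist z y := by gcongr

theorem dist_sq_sub_dist_sq_le_of_le {α : Type*} [PseudoMetricSpace α] {x y z : α}
    {D ε : ℝ} (hy : dist x y ≤ D) (hz : dist x z ≤ D) (hzy : dist z y ≤ ε) :
    dist x y ^ 2 - dist x z ^ 2 ≤ 2 * D * ε :=
  calc dist x y ^ 2 - dist x z ^ 2 ≤ (dist x y + dist x z) * dist z y :=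
        dist_sq_sub_dist_sq_le x y z
    _ ≤ (2 * D) * ε :=
        mul_le_mul (by linarith) hzy dist_nonneg (by linarith [dist_nonneg (x := x) (y := y)])

theorem second_order_difference_lower_bound_general
    {Ω : Type*} [MetricSpace Ω] (a L C D : ℝ)
    (ha : 0 < a) (hL : 0 < L)
    (u p q r v : Ω)
    (hCN : 2 * dist u v ^ 2 ≤ dist u p ^ 2 + dist u r ^ 2 - (1 / 2) * dist p r ^ 2)
    (hpr : 2 * a * L ≤ dist p r)
    (hvq : dist v q ≤ C * a ^ 2)
    (huv : dist u v ≤ D) (huq : dist u q ≤ D) :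
    (2 * L ^ 2 - 4 * D * C) * a ^ 2
        ≤ dist u r ^ 2 - 2 * dist u q ^ 2 + dist u p ^ 2 ∧
    (4 * D * C < 2 * L ^ 2 →
      2 * L ^ 2 - 4 * D * C
        ≤ (1 / a ^ 2) * (dist u r ^ 2 - 2 * dist u q ^ 2 + dist u p ^ 2)) := by
  have hshift : dist u q ^ 2 - dist u v ^ 2 ≤ 2 * D * (C * a ^ 2) :=
    dist_sq_sub_dist_sq_le_of_le huq huv hvq
  have hpr_sq : (2 * a * L) ^ 2 ≤ dist p r ^ 2 := by gcongr
  have hmain : (2 * L ^ 2 - 4 * D * C) * a ^ 2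
      ≤ dist u r ^ 2 - 2 * dist u q ^ 2 + dist u p ^ 2 := by
    linarith
  refine ⟨hmain, fun _ => ?_⟩
  rw [one_div_mul_eq_div, le_div_iff₀ (by positivity)]
  exact hmain

/-- Derivation of the curvature assumption (A5) from the sufficient conditions
(K1)–(K3): in a metric space, if the comparison (CN) inequality holds for the
midpoint `v` of `p` and `r`, the endpoints satisfy the lower Lipschitz bound
`d(p, r) ≥ 2aL⋆`, the midpoint approximation `d(v, q) ≤ C⋆a²` holds, and distances
from `u` are bounded by `D`, then the second-order difference satisfies
`d(u,r)² − 2d(u,q)² + d(u,p)² ≥ (2L⋆² − 4DC⋆)a²`; in particular, if `2L⋆² > 4DC⋆`,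
then `(1/a²)[d(u,r)² − 2d(u,q)² + d(u,p)²] ≥ κ := 2L⋆² − 4DC⋆ > 0`. -/
theorem second_order_difference_lower_bound
    {Ω : Type*} [MetricSpace Ω] (a L C D : ℝ)
    (ha : 0 < a) (hL : 0 < L) (hC : 0 ≤ C) (hD : 0 ≤ D)
    (u p q r v : Ω)
    (hCN : 2 * dist u v ^ 2 ≤ dist u p ^ 2 + dist u r ^ 2 - (1 / 2) * dist p r ^ 2)
    (hpr : 2 * a * L ≤ dist p r)
    (hvq : dist v q ≤ C * a ^ 2)
    (huv : dist u v ≤ D) (huq : dist u q ≤ D) :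
    (2 * L ^ 2 - 4 * D * C) * a ^ 2
        ≤ dist u r ^ 2 - 2 * dist u q ^ 2 + dist u p ^ 2 ∧
    (4 * D * C < 2 * L ^ 2 →
      2 * L ^ 2 - 4 * D * C
        ≤ (1 / a ^ 2) * (dist u r ^ 2 - 2 * dist u q ^ 2 + dist u p ^ 2)) :=
  second_order_difference_lower_bound_general a L C D ha hL u p q r v hCN hpr hvq huv huq
end

section
/- Let z₀ ∈ ℝ, a > 0, C ≥ 0, and let q : ℝ × (0,1) → ℝ and r : (0,1) → ℝ be such that: for every t ∈ (0,1), the map z ↦ q(z, t) is twice continuously differentiable on an open set containing [z₀, z₀ + 2a] with |∂²q(z, t)/∂z²| ≤ r(t) for all z in that interval; the functions t ↦ q(z₀, t), t ↦ q(z₀+a, t), t ↦ q(z₀+2a, t) and r are measurable; and ∫₀¹ r(t)² dt ≤ C². Then ∫₀¹ ( (q(z₀, t) + q(z₀ + 2a, t))/2 − q(z₀ + a, t) )² dt ≤ (9/4)·C²·a⁴. -/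
open MeasureTheory Set

/-!
For each `t`, the midpoint defect `(q(z₀,t) + q(z₀+2a,t))/2 - q(z₀+a,t)` is half a second
difference of `z ↦ q z t`, hence at most `r t * a² / 2` in absolute value by the mean value
theorem applied twice. Squaring and integrating against `∫ r² ≤ C²` gives the bound `C² a⁴ / 4`.
-/

theorem abs_second_difference_le {f f' f'' : ℝ → ℝ} {x a M : ℝ} (ha : 0 ≤ a)
    (hf : ∀ z ∈ Icc x (x + 2 * a), HasDerivAt f (f' z) z)
    (hf' : ∀ z ∈ Icc x (x + 2 * a), HasDerivAt f' (f'' z) z)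
    (hM : ∀ z ∈ Icc x (x + 2 * a), |f'' z| ≤ M) :
    |f (x + 2 * a) - 2 * f (x + a) + f x| ≤ M * a ^ 2 := by
  have hshift : ∀ z ∈ Icc x (x + a), z ∈ Icc x (x + 2 * a) ∧ z + a ∈ Icc x (x + 2 * a) :=
    fun z hz => ⟨⟨hz.1, by linarith [hz.2]⟩, ⟨by linarith [hz.1], by linarith [hz.2]⟩⟩
  have hf'_lip : ∀ z ∈ Icc x (x + a), ‖f' (z + a) - f' z‖ ≤ M * a := by
    intro z hz
    simpa [abs_of_nonneg ha] using (convex_Icc _ _).norm_image_sub_le_of_norm_hasDerivWithin_le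
      (fun w hw => (hf' w hw).hasDerivWithinAt) hM (hshift z hz).1 (hshift z hz).2
  have hg : ∀ z ∈ Icc x (x + a),
      HasDerivWithinAt (fun w => f (w + a) - f w) (f' (z + a) - f' z) (Icc x (x + a)) z :=
    fun z hz => (((hf _ (hshift z hz).2).comp_add_const z a).sub
      (hf z (hshift z hz).1)).hasDerivWithinAt
  have hincrement := (convex_Icc _ _).norm_image_sub_le_of_norm_hasDerivWithin_le hg hf'_lip
    (left_mem_Icc.2 (by linarith)) (right_mem_Icc.2 (by linarith))
  have h2a : x + a + a = x + 2 * a := by ring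
  rw [Real.norm_eq_abs, h2a, add_sub_cancel_left, Real.norm_eq_abs, abs_of_nonneg ha] at hincrement
  calc |f (x + 2 * a) - 2 * f (x + a) + f x|
      = |f (x + 2 * a) - f (x + a) - (f (x + a) - f x)| := by ring_nf
    _ ≤ M * a ^ 2 := by nlinarith

theorem abs_midpoint_sub_le_of_contDiffOn {f : ℝ → ℝ} {U : Set ℝ} {x a M : ℝ} (ha : 0 ≤ a)
    (hU : IsOpen U) (hsub : Icc x (x + 2 * a) ⊆ U) (hf : ContDiffOn ℝ 2 f U)
    (hM : ∀ z ∈ Icc x (x + 2 * a), |deriv (deriv f) z| ≤ M) :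
    |(f x + f (x + 2 * a)) / 2 - f (x + a)| ≤ M * a ^ 2 / 2 := by
  have hderiv : ∀ {g : ℝ → ℝ}, ContDiffOn ℝ 1 g U → ∀ z ∈ Icc x (x + 2 * a),
      HasDerivAt g (deriv g z) z := fun hg z hz =>
    ((hg.differentiableOn one_ne_zero).differentiableAt (hU.mem_nhds (hsub hz))).hasDerivAt
  have hsecond := abs_second_difference_le ha (hderiv (hf.of_le (by norm_num)))
    (hderiv (hf.deriv_of_isOpen hU (by norm_num))) hM
  calc |(f x + f (x + 2 * a)) / 2 - f (x + a)|
      = |f (x + 2 * a) - 2 * f (x + a) + f x| / 2 := by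
        rw [← abs_two, ← abs_div, abs_two]; ring_nf
    _ ≤ M * a ^ 2 / 2 := by linarith

theorem setIntegral_sq_le_of_abs_le_mul {α : Type*} [MeasurableSpace α] {μ : Measure α}
    {s : Set α} {g r : α → ℝ} {c C : ℝ} (hs : MeasurableSet s)
    (hg : AEStronglyMeasurable g (μ.restrict s)) (hr : IntegrableOn (fun t => r t ^ 2) s μ)
    (hgr : ∀ t ∈ s, |g t| ≤ c * r t) (hrC : ∫ t in s, r t ^ 2 ∂μ ≤ C ^ 2) :
    ∫ t in s, g t ^ 2 ∂μ ≤ c ^ 2 * C ^ 2 := by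
  have hpt : ∀ t ∈ s, g t ^ 2 ≤ c ^ 2 * r t ^ 2 := fun t ht => by
    rw [← mul_pow, ← sq_abs (g t)]
    exact pow_le_pow_left₀ (abs_nonneg _) (hgr t ht) 2
  have hint : IntegrableOn (fun t => g t ^ 2) s μ := by
    refine (hr.const_mul (c ^ 2)).mono' (hg.pow 2) ?_
    filter_upwards [self_mem_ae_restrict hs] with t ht
    simpa [abs_of_nonneg (sq_nonneg (g t))] using hpt t ht
  calc ∫ t in s, g t ^ 2 ∂μ
      ≤ ∫ t in s, c ^ 2 * r t ^ 2 ∂μ := setIntegral_mono_on hint (hr.const_mul _) hs hpt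
    _ = c ^ 2 * ∫ t in s, r t ^ 2 ∂μ := integral_const_mul _ _
    _ ≤ c ^ 2 * C ^ 2 := mul_le_mul_of_nonneg_left hrC (sq_nonneg c)

theorem midpoint_approximation_quantile_general
    (z₀ a C : ℝ) (ha : 0 < a)
    (q : ℝ → ℝ → ℝ) (r : ℝ → ℝ)
    (hdiff : ∀ t ∈ Set.Ioo (0 : ℝ) 1, ∃ U : Set ℝ, IsOpen U ∧
      Set.Icc z₀ (z₀ + 2 * a) ⊆ U ∧ ContDiffOn ℝ 2 (fun z => q z t) U ∧
      ∀ z ∈ Set.Icc z₀ (z₀ + 2 * a), |deriv (deriv (fun z => q z t)) z| ≤ r t)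
    (hmeas₀ : Measurable (fun t => q z₀ t))
    (hmeas₁ : Measurable (fun t => q (z₀ + a) t))
    (hmeas₂ : Measurable (fun t => q (z₀ + 2 * a) t))
    (hrint : IntegrableOn (fun t => (r t) ^ 2) (Set.Ioo (0 : ℝ) 1))
    (hrbd : ∫ t in Set.Ioo (0 : ℝ) 1, (r t) ^ 2 ≤ C ^ 2) :
    ∫ t in Set.Ioo (0 : ℝ) 1,
        ((q z₀ t + q (z₀ + 2 * a) t) / 2 - q (z₀ + a) t) ^ 2
      ≤ (9 / 4) * C ^ 2 * a ^ 4 := by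
  have hdefect : ∀ t ∈ Ioo (0 : ℝ) 1,
      |(q z₀ t + q (z₀ + 2 * a) t) / 2 - q (z₀ + a) t| ≤ a ^ 2 / 2 * r t := by
    intro t ht
    obtain ⟨U, hU, hsub, hq, hbd⟩ := hdiff t ht
    simpa [mul_comm, mul_div_assoc] using
      abs_midpoint_sub_le_of_contDiffOn ha.le hU hsub hq hbd
  have hmeas : Measurable fun t => (q z₀ t + q (z₀ + 2 * a) t) / 2 - q (z₀ + a) t :=
    ((hmeas₀.add hmeas₂).div_const 2).sub hmeas₁
  calc _ ≤ (a ^ 2 / 2) ^ 2 * C ^ 2 := setIntegral_sq_le_of_abs_le_mul measurableSet_Ioo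
          hmeas.aestronglyMeasurable hrint hdefect hrbd
    _ ≤ (9 / 4) * C ^ 2 * a ^ 4 := by nlinarith [sq_nonneg C, sq_nonneg (a ^ 2)]

/-- Verification of the midpoint approximation condition (K2) for distributional
responses (Wasserstein-2): writing `q z t` for the quantile function of the link
value at index `z`, evaluated at `t ∈ (0,1)`, if `z ↦ q z t` is twice continuously
differentiable with `|∂²q/∂z²| ≤ r t` on `[z₀, z₀ + 2a]` and `∫₀¹ r(t)² dt ≤ C²`,
then the squared L²(0,1) distance between the average `(q(z₀,·) + q(z₀+2a,·))/2`
and `q(z₀+a, ·)` is at most `(9/4)C²a⁴`. -/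
theorem midpoint_approximation_quantile
    (z₀ a C : ℝ) (ha : 0 < a) (hC : 0 ≤ C)
    (q : ℝ → ℝ → ℝ) (r : ℝ → ℝ)
    (hdiff : ∀ t ∈ Set.Ioo (0 : ℝ) 1, ∃ U : Set ℝ, IsOpen U ∧
      Set.Icc z₀ (z₀ + 2 * a) ⊆ U ∧ ContDiffOn ℝ 2 (fun z => q z t) U ∧
      ∀ z ∈ Set.Icc z₀ (z₀ + 2 * a), |deriv (deriv (fun z => q z t)) z| ≤ r t)
    (hmeas₀ : Measurable (fun t => q z₀ t))
    (hmeas₁ : Measurable (fun t => q (z₀ + a) t))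
    (hmeas₂ : Measurable (fun t => q (z₀ + 2 * a) t))
    (hmeasr : Measurable r)
    (hrint : IntegrableOn (fun t => (r t) ^ 2) (Set.Ioo (0 : ℝ) 1))
    (hrbd : ∫ t in Set.Ioo (0 : ℝ) 1, (r t) ^ 2 ≤ C ^ 2) :
    ∫ t in Set.Ioo (0 : ℝ) 1,
        ((q z₀ t + q (z₀ + 2 * a) t) / 2 - q (z₀ + a) t) ^ 2
      ≤ (9 / 4) * C ^ 2 * a ^ 4 :=
  midpoint_approximation_quantile_general z₀ a C ha q r hdiff hmeas₀ hmeas₁ hmeas₂ hrint hrbd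
end
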